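/- Let X, Y be locally convex Hausdorff topological vector spaces. If P ⊆ X × Y is a polyhedral convex set, then its projection π_X(P) onto X is a polyhedral convex set in X and its projection π_Y(P) onto Y is a polyhedral convex set in Y. -/

import Mathlib

/-- A set is polyhedral convex if it is a finite intersection of half-spaces
given by continuous linear functionals. -/
def IsPolyhedralConvex {E : Type*} [AddCommGroup E] [Module ℝ E] [TopologicalSpace E]
    (D : Set E) : Prop :=
  ∃ (n : ℕ) (f : Fin n → E →L[ℝ] ℝ) (α : Fin n → ℝ),
    D = {x | ∀ i, f i x ≤ α i}

/-!
Fourier–Motzkin elimination. Writing the constraints as `g i x + h i y ≤ α i`, a point `x` lies in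
the projection iff some `z` in the range of `y ↦ (h i y)ᵢ`, a subspace of `ℝⁿ`, satisfies
`g i x + z i ≤ α i`; parametrising that range by some `ℝᵐ` leaves finitely many real variables to
eliminate. A single real variable `s` is eliminated because `∃ s, ∀ i, a i * s ≤ c i` holds iff
`0 ≤ c i` whenever `a i = 0` and every lower bound `c j / a j` (`a j < 0`) is at most every upper
bound `c i / a i` (`0 < a i`); for `c i = α i - g i x` these are again finitely many linear
inequalities in `x`.
-/

open Set

theorem Set.Finite.exists_between_of_forall_le {α : Type*} [ConditionallyCompleteLattice α]
    [Nonempty α] {s t : Set α} (hs : s.Finite) (ht : t.Finite)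
    (H : ∀ x ∈ s, ∀ y ∈ t, x ≤ y) : ∃ b, (∀ x ∈ s, x ≤ b) ∧ ∀ y ∈ t, b ≤ y := by
  rcases s.eq_empty_or_nonempty with rfl | hne
  · obtain ⟨b, hb⟩ := ht.bddBelow
    exact ⟨b, by simp, hb⟩
  · exact ⟨sSup s, fun x hx => le_csSup hs.bddAbove hx,
      fun y hy => csSup_le hne fun x hx => H x hx y hy⟩

theorem exists_forall_mul_le_iff {ι : Type*} [Finite ι] (a c : ι → ℝ) :
    (∃ s : ℝ, ∀ i, a i * s ≤ c i) ↔
      (∀ i, a i = 0 → 0 ≤ c i) ∧ ∀ i j, 0 < a i → a j < 0 → a j * c i ≤ a i * c j := by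
  constructor
  · rintro ⟨s, hs⟩
    exact ⟨fun i hi => by simpa [hi] using hs i,
      fun i j hi hj => by nlinarith [hs i, hs j]⟩
  · rintro ⟨hzero, hpair⟩
    obtain ⟨s, hlower, hupper⟩ := Set.Finite.exists_between_of_forall_le
      (s := (fun j => c j / a j) '' {j | a j < 0}) (t := (fun i => c i / a i) '' {i | 0 < a i})
      (toFinite _) (toFinite _) (by
        rintro _ ⟨j, hj, rfl⟩ _ ⟨i, hi, rfl⟩
        rw [div_le_iff_of_neg hj, div_mul_eq_mul_div, div_le_iff₀ hi]
        linarith [hpair i j hi hj])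
    refine ⟨s, fun i => ?_⟩
    rcases lt_trichotomy (a i) 0 with hi | hi | hi
    · have := hlower _ ⟨i, hi, rfl⟩
      rwa [div_le_iff_of_neg hi, mul_comm] at this
    · simpa [hi] using hzero i hi
    · have := hupper _ ⟨i, hi, rfl⟩
      rwa [le_div_iff₀ hi, mul_comm] at this

theorem Set.image_fst_preimage_prodMap_id_congr {α β β' γ : Type*} (R : Set (α × γ))
    {u : β → γ} {v : β' → γ} (h : range u = range v) :
    Prod.fst '' (Prod.map id u ⁻¹' R) = Prod.fst '' (Prod.map id v ⁻¹' R) := by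
  ext x
  simp only [mem_image, mem_preimage, Prod.exists, Prod.map_apply, id_eq, exists_and_right,
    exists_eq_right]
  rw [← exists_range_iff (p := fun z => (x, z) ∈ R), h, exists_range_iff]

namespace IsPolyhedralConvex

variable {E F : Type*} [AddCommGroup E] [Module ℝ E] [TopologicalSpace E]
  [AddCommGroup F] [Module ℝ F] [TopologicalSpace F]

theorem of_finite {ι : Type*} [Finite ι] (f : ι → E →L[ℝ] ℝ) (α : ι → ℝ) :
    IsPolyhedralConvex {x | ∀ i, f i x ≤ α i} := by
  obtain ⟨n, ⟨e⟩⟩ := Finite.exists_equiv_fin ι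
  refine ⟨n, f ∘ e.symm, α ∘ e.symm, ?_⟩
  ext x
  simp [e.symm.forall_congr_left]

theorem inter {C D : Set E} (hC : IsPolyhedralConvex C) (hD : IsPolyhedralConvex D) :
    IsPolyhedralConvex (C ∩ D) := by
  obtain ⟨m, f, α, rfl⟩ := hC
  obtain ⟨n, g, β, rfl⟩ := hD
  convert of_finite (Sum.elim f g) (Sum.elim α β) using 1
  ext x
  simp [Sum.forall]

theorem preimage {D : Set F} (hD : IsPolyhedralConvex D) (L : E →L[ℝ] F) :
    IsPolyhedralConvex (L ⁻¹' D) := by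
  obtain ⟨n, f, α, rfl⟩ := hD
  exact ⟨n, fun i => (f i).comp L, α, rfl⟩

theorem image_fst_prod_real {P : Set (E × ℝ)} (hP : IsPolyhedralConvex P) :
    IsPolyhedralConvex (Prod.fst '' P) := by
  obtain ⟨n, f, α, rfl⟩ := hP
  set g : Fin n → E →L[ℝ] ℝ := fun i => (f i).comp (.inl ℝ E ℝ)
  set a : Fin n → ℝ := fun i => f i (0, 1)
  have hf : ∀ i x s, f i (x, s) = g i x + a i * s := fun i x s => by
    rw [← (f i).comp_inl_add_comp_inr, mul_comm, ← smul_eq_mul, ← map_smul]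
    simp [g]
  have hproj : Prod.fst '' {p | ∀ i, f i p ≤ α i} = {x | ∃ s, ∀ i, a i * s ≤ α i - g i x} := by
    ext x
    simp only [mem_image, Prod.exists, exists_and_right, exists_eq_right, mem_ofPred_eq, hf,
      le_sub_iff_add_le']
  rw [hproj]
  convert (of_finite (fun i : {i // a i = 0} => g i) (fun i => α i)).inter
    (of_finite (fun p : {p : Fin n × Fin n // 0 < a p.1 ∧ a p.2 < 0} =>
      a p.1.1 • g p.1.2 - a p.1.2 • g p.1.1) fun p => a p.1.1 * α p.1.2 - a p.1.2 * α p.1.1)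
    using 1
  ext x
  simp only [mem_ofPred_eq, exists_forall_mul_le_iff, mem_inter_iff, Subtype.forall, Prod.forall,
    sub_apply, smul_apply, smul_eq_mul, sub_nonneg, and_imp]
  refine and_congr Iff.rfl (forall₄_congr fun i j _ _ => ?_)
  constructor <;> intro h <;> linarith

theorem image_fst_prod_pi {d : ℕ} {P : Set (E × (Fin d → ℝ))} (hP : IsPolyhedralConvex P) :
    IsPolyhedralConvex (Prod.fst '' P) := by
  induction d generalizing E with
  | zero =>
    convert hP.preimage (.inl ℝ E (Fin 0 → ℝ)) using 1
    ext x
    simp only [mem_image, Prod.exists, Unique.exists_iff, exists_eq_right, mem_preimage,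
      ContinuousLinearMap.inl_apply, Matrix.zero_empty]
    congr!
  | succ d ih =>
    let consMap : (E × ℝ) × (Fin d → ℝ) →L[ℝ] E × (Fin (d + 1) → ℝ) :=
      (ContinuousLinearMap.fst ℝ E ℝ ∘L .fst _ _ _).prod
        ((ContinuousLinearMap.snd ℝ E ℝ ∘L .fst _ _ _).finCons (.snd _ _ _))
    convert image_fst_prod_real (ih (hP.preimage consMap)) using 1
    ext x
    simp [consMap, Fin.exists_fin_succ_pi, funext (Fin.consEquivL_apply ℝ _ _)]

theorem image_fst {P : Set (E × F)} (hP : IsPolyhedralConvex P) :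
    IsPolyhedralConvex (Prod.fst '' P) := by
  obtain ⟨n, f, α, rfl⟩ := hP
  let T : F →ₗ[ℝ] Fin n → ℝ := LinearMap.pi fun i => ((f i).comp (.inr ℝ E F) : F →ₗ[ℝ] ℝ)
  obtain ⟨m, S, hS⟩ := Module.Finite.exists_fin' ℝ (LinearMap.range T)
  let R : Set (E × (Fin n → ℝ)) := {p | ∀ i, (f i ∘L .inl ℝ E F) p.1 + p.2 i ≤ α i}
  have hR : IsPolyhedralConvex R := of_finite (fun i => (f i).comp (.inl ℝ E F) ∘L .fst _ _ _ +
    (ContinuousLinearMap.proj i : (Fin n → ℝ) →L[ℝ] ℝ) ∘L .snd _ _ _) α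
  let S' : (Fin m → ℝ) →L[ℝ] Fin n → ℝ := ((LinearMap.range T).subtype ∘ₗ S).toContinuousLinearMap
  have hS' : range S' = range T := by
    rw [LinearMap.coe_toContinuousLinearMap', LinearMap.coe_comp, range_comp, hS.range_eq,
      image_univ]
    exact Subtype.range_val.trans (LinearMap.coe_range T)
  have hP : {p : E × F | ∀ i, f i p ≤ α i} = Prod.map id T ⁻¹' R := by
    ext ⟨x, y⟩
    exact forall_congr' fun i => by rw [← (f i).comp_inl_add_comp_inr]; rfl
  rw [hP, image_fst_preimage_prodMap_id_congr R hS'.symm]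
  exact (hR.preimage ((ContinuousLinearMap.id ℝ E).prodMap S')).image_fst_prod_pi

theorem image_snd {P : Set (E × F)} (hP : IsPolyhedralConvex P) :
    IsPolyhedralConvex (Prod.snd '' P) := by
  convert (hP.preimage (ContinuousLinearEquiv.prodComm ℝ F E).toContinuousLinearMap).image_fst
    using 1
  ext y
  simp

end IsPolyhedralConvex

theorem proj_polyhedral_general
    {X Y : Type*}
    [AddCommGroup X] [Module ℝ X] [TopologicalSpace X]
    [AddCommGroup Y] [Module ℝ Y] [TopologicalSpace Y]
    (P : Set (X × Y)) (hP : IsPolyhedralConvex P) :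
    IsPolyhedralConvex (Prod.fst '' P) ∧ IsPolyhedralConvex (Prod.snd '' P) :=
  ⟨hP.image_fst, hP.image_snd⟩

/-- Coordinate projections of a polyhedral convex subset of
`X × Y` are polyhedral convex. -/
theorem proj_polyhedral
    {X Y : Type*}
    [AddCommGroup X] [Module ℝ X] [TopologicalSpace X] [IsTopologicalAddGroup X]
    [ContinuousSMul ℝ X] [LocallyConvexSpace ℝ X] [T2Space X]
    [AddCommGroup Y] [Module ℝ Y] [TopologicalSpace Y] [IsTopologicalAddGroup Y]
    [ContinuousSMul ℝ Y] [LocallyConvexSpace ℝ Y] [T2Space Y]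
    (P : Set (X × Y)) (hP : IsPolyhedralConvex P) :
    IsPolyhedralConvex (Prod.fst '' P) ∧ IsPolyhedralConvex (Prod.snd '' P) :=
  proj_polyhedral_general P hP
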